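/- Define α* = kβ/(kL + 2β) + √((k²LU + 2kLβ + 2kUβ + 4β² + k²β²)/(k²L² + 4kLβ + 4β²)). Then α* is positive and satisfies the simplified balance equation U − L − 2β = (U·(1 − 1/α*) − 2β·(1 − 1/k + 1/(kα*)))·(1 + 1/α*), and the unique positive solution α of Equation (3) satisfies α ≤ α*. -/

import Mathlib

/-- The explicit value
`α* = kβ/(kL + 2β) + √((k²LU + 2kLβ + 2kUβ + 4β² + k²β²)/(k²L² + 4kLβ + 4β²))`. -/
noncomputable def alphaStar (L U β : ℝ) (k : ℕ) : ℝ :=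
  (k : ℝ) * β / ((k : ℝ) * L + 2 * β)
    + Real.sqrt (((k : ℝ) ^ 2 * L * U + 2 * (k : ℝ) * L * β + 2 * (k : ℝ) * U * β
          + 4 * β ^ 2 + (k : ℝ) ^ 2 * β ^ 2)
        / ((k : ℝ) ^ 2 * L ^ 2 + 4 * (k : ℝ) * L * β + 4 * β ^ 2))

set_option maxHeartbeats 1600000

/-- **Corollary 4.3(a).** `α*` is positive, satisfies the simplified balance
equation `U − L − 2β = (U·(1 − 1/α*) − 2β·(1 − 1/k + 1/(kα*)))·(1 + 1/α*)`, and
upper-bounds the unique positive solution `α` of Equation (3). -/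
theorem alpha_star_upper_bound
    (L U : ℝ) (hL : 0 < L) (hLU : L < U)
    (k : ℕ) (hk : 1 ≤ k)
    (β : ℝ) (hβ : 0 < 2 * β) (hβUL : 2 * β < U - L) :
    0 < alphaStar L U β k ∧
    (U - L - 2 * β
      = (U * (1 - 1 / alphaStar L U β k)
          - 2 * β * (1 - 1 / (k : ℝ) + 1 / ((k : ℝ) * alphaStar L U β k)))
          * (1 + 1 / alphaStar L U β k)) ∧
    (∀ α : ℝ, 0 < α →
      U - L - 2 * β
          = (U * (1 - 1 / α) - 2 * β * (1 - 1 / (k : ℝ) + 1 / ((k : ℝ) * α)))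
              * (1 + 1 / ((k : ℝ) * α)) ^ k →
        α ≤ alphaStar L U β k) := by
  have hk1 : (1:ℝ) ≤ (k:ℝ) := by exact_mod_cast hk
  set kk : ℝ := (k:ℝ) with hkk
  have hk0 : 0 < kk := by linarith
  have hβ0 : 0 < β := by linarith
  have hU : 0 < U := by linarith
  have hD : 0 < kk * L + 2 * β := by positivity
  clear_value kk
  have hN : 0 < kk ^ 2 * β ^ 2 + (kk * L + 2 * β) * (kk * U + 2 * β) := by positivity
  set N : ℝ := kk ^ 2 * β ^ 2 + (kk * L + 2 * β) * (kk * U + 2 * β) with hNdef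
  clear_value N
  set s : ℝ := Real.sqrt N with hsdef
  have hs0 : 0 ≤ s := Real.sqrt_nonneg N
  have hs2 : s ^ 2 = N := Real.sq_sqrt hN.le
  have hskβ : kk * β < s := by nlinarith [mul_pos hD (by positivity : (0:ℝ) < kk * U + 2 * β)]
  have hA : alphaStar L U β k = (kk * β + s) / (kk * L + 2 * β) := by
    unfold alphaStar
    rw [← hkk]
    rw [show (kk ^ 2 * L * U + 2 * kk * L * β + 2 * kk * U * β + 4 * β ^ 2 + kk ^ 2 * β ^ 2)
        / (kk ^ 2 * L ^ 2 + 4 * kk * L * β + 4 * β ^ 2)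
        = N / (kk * L + 2 * β) ^ 2 by rw [hNdef]; ring_nf]
    rw [Real.sqrt_div hN.le, Real.sqrt_sq hD.le, ← hsdef]
    field_simp
  set A : ℝ := alphaStar L U β k with hAdef
  have hA0 : 0 < A := by
    rw [hA]; positivity
  have hDA : (kk * L + 2 * β) * A = kk * β + s := by
    rw [hA]; field_simp
  have hquad : (kk * L + 2 * β) * A ^ 2 = 2 * kk * β * A + (kk * U + 2 * β) := by
    have h1 : ((kk * L + 2 * β) * A - kk * β) ^ 2 = N := by
      rw [show (kk * L + 2 * β) * A - kk * β = s by linarith, hs2]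
    have h2 : (kk * L + 2 * β) * ((kk * L + 2 * β) * A ^ 2)
        = (kk * L + 2 * β) * (2 * kk * β * A + (kk * U + 2 * β)) := by
      rw [hNdef] at h1; nlinarith [h1]
    exact mul_left_cancel₀ hD.ne' h2
  have hAne : A ≠ 0 := hA0.ne'
  have hkne : kk ≠ 0 := hk0.ne'
  clear_value s A
  refine ⟨hA0, ?_, ?_⟩
  · field_simp
    linear_combination (-1) * hquad
  · intro α hα0 heq
    have hαne : α ≠ 0 := hα0.ne'
    set F : ℝ := U * (1 - 1 / α) - 2 * β * (1 - 1 / kk + 1 / (kk * α)) with hFdef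
    set P : ℝ := (1 + 1 / (kk * α)) ^ k with hPdef
    clear_value F P
    have hP0 : 0 < P := by rw [hPdef]; positivity
    have hb : 1 + 1 / α ≤ P := by
      have hx2 : (-2:ℝ) ≤ 1 / (kk * α) := by
        have h0 : (0:ℝ) ≤ 1 / (kk * α) := by positivity
        linarith
      have h := one_add_mul_le_pow hx2 k
      rw [hPdef]
      calc 1 + 1 / α = 1 + (k:ℝ) * (1 / (kk * α)) := by rw [← hkk]; field_simp
        _ ≤ _ := h
    have hF0 : 0 < F := by
      have h1 : 0 < F * P := by linarith [heq]
      have h2 := div_pos h1 hP0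
      rwa [mul_div_assoc, div_self hP0.ne', mul_one] at h2
    have hle : F * (1 + 1 / α) ≤ U - L - 2 * β := by
      calc F * (1 + 1 / α) ≤ F * P := by
            exact mul_le_mul_of_nonneg_left hb hF0.le
        _ = U - L - 2 * β := heq.symm
    have hIdent : (kk * α ^ 2) * (F * (1 + 1 / α))
        = kk * U * α ^ 2 - 2 * (kk - 1) * β * α ^ 2 - 2 * kk * β * α - kk * U - 2 * β := by
      rw [hFdef]; field_simp; ring
    have hmul : (kk * α ^ 2) * (F * (1 + 1 / α)) ≤ (kk * α ^ 2) * (U - L - 2 * β) :=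
      mul_le_mul_of_nonneg_left hle (by positivity)
    rw [hIdent] at hmul
    clear hb heq hle hIdent hF0 hP0 hFdef hPdef
    clear F P
    have hfα : (kk * L + 2 * β) * α ^ 2 ≤ 2 * kk * β * α + (kk * U + 2 * β) := by
      nlinarith [hmul]
    by_contra hcon
    push_neg at hcon
    have hpos : 0 < (kk * L + 2 * β) * (α + A) - 2 * kk * β := by
      nlinarith [mul_pos hD hα0, hDA, hskβ]
    nlinarith [mul_pos (sub_pos.2 hcon) hpos, hquad, hfα]
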